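/- The ℂ-linear span of the set { p ⊗ q : r is a 2×3 matrix with entries in W determining a stable representation, and p, q ∈ H_r } is the whole space S²W ⊗ S²W. -/

import Mathlib

open MvPolynomial TensorProduct

noncomputable section

/-- The polynomial ring ℂ[x,y,z]. -/
abbrev Pxyz : Type := MvPolynomial (Fin 3) ℂ

/-- The linear form in ℂ[x,y,z] with coefficient vector `w`,
identifying `W = ℂ³` with the space of linear forms via the basis `x, y, z`. -/
def toPoly (w : Fin 3 → ℂ) : Pxyz := ∑ k, MvPolynomial.C (w k) * MvPolynomial.X k

/-- The representation `(ρ₁, ρ₂, ρ₃)` of the 3-Kronecker quiver of dimension vector `(2,3)`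
determined by a 2×3 matrix `r` of linear forms (given by their coefficient vectors), via
`v·r = x·ρ₁(v) + y·ρ₂(v) + z·ρ₃(v)`. -/
def repOf (r : Matrix (Fin 2) (Fin 3) (Fin 3 → ℂ)) (k : Fin 3) :
    (Fin 2 → ℂ) →ₗ[ℂ] (Fin 3 → ℂ) :=
  ∑ i : Fin 2, (LinearMap.proj i : (Fin 2 → ℂ) →ₗ[ℂ] ℂ).smulRight (fun j => r i j k)

/-- Stability (for the stability parameter θ = (3,−2)) of a representation of the 3-Kronecker
quiver of dimension vector (2,3): for every subrepresentation `(U₁, U₂)` other than `(0,0)` and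
`(ℂ², ℂ³)` one has `3·dim U₁ < 2·dim U₂`. -/
def KStable (ρ : Fin 3 → ((Fin 2 → ℂ) →ₗ[ℂ] (Fin 3 → ℂ))) : Prop :=
  ∀ (U₁ : Submodule ℂ (Fin 2 → ℂ)) (U₂ : Submodule ℂ (Fin 3 → ℂ)),
    (∀ k, U₁.map (ρ k) ≤ U₂) →
    ¬(U₁ = ⊥ ∧ U₂ = ⊥) → ¬(U₁ = ⊤ ∧ U₂ = ⊤) →
    3 * Module.finrank ℂ U₁ < 2 * Module.finrank ℂ U₂

/-- The three maximal minors of a 2×3 matrix of polynomials: `minorP m k` is (up to sign) the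
2×2 minor obtained by deleting the `k`-th column. -/
def minorP (m : Matrix (Fin 2) (Fin 3) Pxyz) (k : Fin 3) : Pxyz :=
  m 0 (k + 1) * m 1 (k + 2) - m 0 (k + 2) * m 1 (k + 1)

/-- The three maximal minors of a 2×3 matrix of linear forms; they are elements of `S²W`,
i.e. homogeneous quadratic polynomials in ℂ[x,y,z]. -/
def minor (r : Matrix (Fin 2) (Fin 3) (Fin 3 → ℂ)) (k : Fin 3) : Pxyz :=
  minorP (Matrix.of fun i j => toPoly (r i j)) k

/-- `H_r ⊆ S²W`, the linear span of the three maximal minors of `r`. -/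
def Hr (r : Matrix (Fin 2) (Fin 3) (Fin 3 → ℂ)) : Submodule ℂ Pxyz :=
  Submodule.span ℂ (Set.range (minor r))

/-!
`S²W ⊗ S²W` is spanned by the tensors `m ⊗ m'` of degree-2 monomials. For basis vectors
`u ∉ {v, w}` the matrix `[[x_u, x_w, 0], [0, x_u, x_v]]` is stable and its maximal minors are,
up to sign, `x_v x_w`, `x_u x_v` and `x_u²`. Any two degree-2 monomials occur together among the
minors of one such matrix, so every `m ⊗ m'` is of the form `p ⊗ q` with `p, q ∈ H_r`.
-/

lemma linearIndependent_pair_of_det_ne_zero {K ι : Type*} [Field K] {a b : ι → K} (i j : ι)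
    (h : a i * b j - a j * b i ≠ 0) : LinearIndependent K ![a, b] := by
  rw [LinearIndependent.pair_iff]
  intro s t hst
  have hi : s * a i + t * b i = 0 := by simpa using congrFun hst i
  have hj : s * a j + t * b j = 0 := by simpa using congrFun hst j
  have hs : s * (a i * b j - a j * b i) = 0 := by linear_combination b j * hi - b i * hj
  have ht : t * (a i * b j - a j * b i) = 0 := by linear_combination a i * hj - a j * hi
  exact ⟨(mul_eq_zero.1 hs).resolve_right h, (mul_eq_zero.1 ht).resolve_right h⟩

lemma two_le_finrank_of_linearIndependent_pair {K V : Type*} [Field K] [AddCommGroup V]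
    [Module K V] [FiniteDimensional K V] {U : Submodule K V} {a b : V} (ha : a ∈ U) (hb : b ∈ U)
    (h : LinearIndependent K ![a, b]) : 2 ≤ Module.finrank K U := by
  have hle : Submodule.span K (Set.range ![a, b]) ≤ U := by
    rw [Submodule.span_le, Set.range_subset_iff]
    intro i
    fin_cases i <;> assumption
  simpa [finrank_span_eq_card h] using Submodule.finrank_mono hle

open scoped Pointwise in
lemma homogeneousSubmodule_two_eq_span {σ R : Type*} [CommSemiring R] :
    homogeneousSubmodule σ R 2 =
      Submodule.span R (Set.range (X : σ → MvPolynomial σ R) * Set.range X) := by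
  rw [← homogeneousSubmodule_one_pow, homogeneousSubmodule_one_eq_span_X, sq,
    Submodule.span_mul_span]

lemma X_mul_X_eq_of_sym2_eq {σ R : Type*} [CommSemiring R] {a b c d : σ}
    (h : s(a, b) = s(c, d)) : (X a * X b : MvPolynomial σ R) = X c * X d := by
  rcases Sym2.eq_iff.mp h with ⟨rfl, rfl⟩ | ⟨rfl, rfl⟩
  · rfl
  · exact mul_comm _ _

lemma kStable_of_linearIndependent (ρ : Fin 3 → (Fin 2 → ℂ) →ₗ[ℂ] (Fin 3 → ℂ))
    (hpair : ∀ v, v ≠ 0 → ∃ k l, LinearIndependent ℂ ![ρ k v, ρ l v])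
    (hspan : ∀ j, ∃ k v, ρ k v = Pi.single j 1) :
    KStable ρ := by
  intro U₁ U₂ hmap hbot htop
  have hmem : ∀ k, ∀ v ∈ U₁, ρ k v ∈ U₂ := fun k v hv => hmap k ⟨v, hv, rfl⟩
  by_cases hU₁bot : U₁ = ⊥
  · subst hU₁bot
    have : Module.finrank ℂ U₂ ≠ 0 :=
      fun h => hbot ⟨rfl, Submodule.finrank_eq_zero.mp h⟩
    rw [finrank_bot]
    omega
  have hU₁top : U₁ ≠ ⊤ := by
    rintro rfl
    refine htop ⟨rfl, top_le_iff.mp ?_⟩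
    rw [← (Pi.basisFun ℂ (Fin 3)).span_eq, Submodule.span_le, Set.range_subset_iff]
    intro j
    obtain ⟨k, v, hv⟩ := hspan j
    rw [Pi.basisFun_apply, ← hv]
    exact hmem k v Submodule.mem_top
  have hU₁ : Module.finrank ℂ U₁ = 1 := by
    have hlt : Module.finrank ℂ U₁ < 2 := by
      simpa using Submodule.finrank_lt hU₁top
    have : Module.finrank ℂ U₁ ≠ 0 := fun h => hU₁bot (Submodule.finrank_eq_zero.mp h)
    omega
  obtain ⟨v, hvU, hv⟩ := (Submodule.ne_bot_iff U₁).mp hU₁bot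
  obtain ⟨k, l, hkl⟩ := hpair v hv
  have := two_le_finrank_of_linearIndependent_pair (hmem k v hvU) (hmem l v hvU) hkl
  omega

lemma repOf_apply (r : Matrix (Fin 2) (Fin 3) (Fin 3 → ℂ)) (k : Fin 3) (v : Fin 2 → ℂ)
    (j : Fin 3) : repOf r k v j = v 0 * r 0 j k + v 1 * r 1 j k := by
  simp [repOf, Fin.sum_univ_two]

lemma toPoly_zero : toPoly 0 = 0 := by
  simp [toPoly]

lemma toPoly_single_one (i : Fin 3) : toPoly (Pi.single i 1) = X i := by
  simp [toPoly, Pi.single_apply]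

lemma minor_isHomogeneous (r : Matrix (Fin 2) (Fin 3) (Fin 3 → ℂ)) (k : Fin 3) :
    (minor r k).IsHomogeneous 2 := by
  have hlin : ∀ w, (toPoly w).IsHomogeneous 1 := fun w =>
    .sum _ _ _ fun k _ => isHomogeneous_C_mul_X _ _
  exact ((hlin _).mul (hlin _)).sub ((hlin _).mul (hlin _))

lemma Hr_le_homogeneousSubmodule (r : Matrix (Fin 2) (Fin 3) (Fin 3 → ℂ)) :
    Hr r ≤ homogeneousSubmodule (Fin 3) ℂ 2 :=
  Submodule.span_le.mpr <| Set.range_subset_iff.mpr <| minor_isHomogeneous r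

def monomialMatrix (u v w : Fin 3) : Matrix (Fin 2) (Fin 3) (Fin 3 → ℂ) :=
  !![Pi.single u 1, Pi.single w 1, 0; 0, Pi.single u 1, Pi.single v 1]

def monomialMatrixMinorSupport (u v w : Fin 3) : Finset (Sym2 (Fin 3)) :=
  {s(u, u), s(u, v), s(v, w)}

section monomialMatrix

variable {u v w : Fin 3}

lemma repOf_monomialMatrix (k : Fin 3) (x : Fin 2 → ℂ) :
    repOf (monomialMatrix u v w) k x =
      ![if k = u then x 0 else 0, (if k = w then x 0 else 0) + (if k = u then x 1 else 0),
        if k = v then x 1 else 0] := by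
  funext j
  fin_cases j <;> simp [repOf_apply, monomialMatrix, Pi.single_apply]

lemma kStable_monomialMatrix (huv : u ≠ v) (huw : u ≠ w) :
    KStable (repOf (monomialMatrix u v w)) := by
  apply kStable_of_linearIndependent
  · intro x hx
    by_cases hx₀ : x 0 = 0
    · have hx₁ : x 1 ≠ 0 := fun hx₁ => hx (funext fun i => by fin_cases i <;> assumption)
      refine ⟨u, v, linearIndependent_pair_of_det_ne_zero 1 2 ?_⟩
      simpa [repOf_monomialMatrix, huv, huv.symm, hx₀] using hx₁
    · refine ⟨u, w, linearIndependent_pair_of_det_ne_zero 0 1 ?_⟩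
      simpa [repOf_monomialMatrix, huv, huw, huw.symm] using hx₀
  · intro j
    fin_cases j
    · exact ⟨u, ![1, 0], by funext j; fin_cases j <;> simp [repOf_monomialMatrix, huw]⟩
    · exact ⟨u, ![0, 1], by funext j; fin_cases j <;> simp [repOf_monomialMatrix, huv]⟩
    · exact ⟨v, ![0, 1], by funext j; fin_cases j <;> simp [repOf_monomialMatrix, huv.symm]⟩

lemma X_mul_X_mem_Hr_monomialMatrix {a b : Fin 3}
    (h : s(a, b) ∈ monomialMatrixMinorSupport u v w) :
    X a * X b ∈ Hr (monomialMatrix u v w) := by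
  have hminor : minor (monomialMatrix u v w) = ![X w * X v, -(X u * X v), X u * X u] := by
    funext k
    fin_cases k <;> simp [minor, minorP, monomialMatrix, toPoly_single_one, toPoly_zero]
  have hmem : ∀ k, minor (monomialMatrix u v w) k ∈ Hr (monomialMatrix u v w) :=
    fun k => Submodule.subset_span ⟨k, rfl⟩
  simp only [monomialMatrixMinorSupport, Finset.mem_insert, Finset.mem_singleton] at h
  rcases h with h | h | h <;> rw [X_mul_X_eq_of_sym2_eq h]
  · simpa [hminor] using hmem 2
  · simpa [hminor] using neg_mem (hmem 1)
  · simpa [hminor, mul_comm] using hmem 0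

end monomialMatrix

lemma exists_mem_monomialMatrixMinorSupport (a b c d : Fin 3) :
    ∃ u v w : Fin 3, u ≠ v ∧ u ≠ w ∧
      s(a, b) ∈ monomialMatrixMinorSupport u v w ∧ s(c, d) ∈ monomialMatrixMinorSupport u v w := by
  revert a b c d
  decide

/-- The ℂ-linear span of the set
`{ p ⊗ q : r determines a stable representation, p, q ∈ H_r }` is the whole space
`S²W ⊗ S²W` (realized as the span of the pure tensors of homogeneous degree-2 polynomials
inside `ℂ[x,y,z] ⊗ ℂ[x,y,z]`). -/
theorem stmt12 :
    Submodule.span ℂ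
        {x : Pxyz ⊗[ℂ] Pxyz | ∃ r : Matrix (Fin 2) (Fin 3) (Fin 3 → ℂ),
          KStable (repOf r) ∧ ∃ p ∈ Hr r, ∃ q ∈ Hr r, x = p ⊗ₜ[ℂ] q} =
      Submodule.span ℂ
        {x : Pxyz ⊗[ℂ] Pxyz | ∃ p ∈ homogeneousSubmodule (Fin 3) ℂ 2,
          ∃ q ∈ homogeneousSubmodule (Fin 3) ℂ 2, x = p ⊗ₜ[ℂ] q} := by
  apply le_antisymm
  · refine Submodule.span_mono ?_
    rintro _ ⟨r, -, p, hp, q, hq, rfl⟩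
    exact ⟨p, Hr_le_homogeneousSubmodule r hp, q, Hr_le_homogeneousSubmodule r hq, rfl⟩
  · rw [Submodule.span_le]
    rintro _ ⟨p, hp, q, hq, rfl⟩
    rw [homogeneousSubmodule_two_eq_span] at hp hq
    have hpq := Submodule.apply_mem_map₂ (TensorProduct.mk ℂ Pxyz Pxyz) hp hq
    rw [Submodule.map₂_span_span] at hpq
    refine Submodule.span_le.mpr ?_ hpq
    rintro _ ⟨_, ⟨_, ⟨a, rfl⟩, _, ⟨b, rfl⟩, rfl⟩, _, ⟨_, ⟨c, rfl⟩, _, ⟨d, rfl⟩, rfl⟩, rfl⟩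
    obtain ⟨u, v, w, huv, huw, hab, hcd⟩ := exists_mem_monomialMatrixMinorSupport a b c d
    exact Submodule.subset_span ⟨monomialMatrix u v w, kStable_monomialMatrix huv huw, _,
      X_mul_X_mem_Hr_monomialMatrix hab, _, X_mul_X_mem_Hr_monomialMatrix hcd, rfl⟩
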